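/- arXiv:1404.2641 — 2 statements merged into one kernel-verified Lean document; each statement's English description precedes it below -/
import Mathlib

section
/- Let φ : (R, m) → (S, n) be an injective local homomorphism of Noetherian local rings, and let φ̂ : R̂ → Ŝ be the induced map on completions. Then φ̂ is injective if and only if for each positive integer k there exists a positive integer s such that n^s ∩ R ⊆ m^k. -/
/-!
Put `𝔟ₛ = φ⁻¹(𝔫ˢ)`. Compatibility of `Φ` with `φ` and with the projections shows that `x ∈ ker Φ`
exactly when, at every level `k`, the image of `x` in `R/𝔪ᵏ` comes from `𝔟ₖ`. If every `𝔪ᵏ`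
contains some `𝔟ₛ`, such an `x` vanishes. Otherwise some `𝔪ᵏ` contains no `𝔟ₛ`; since `R/𝔪ʲ` is
Artinian, the descending chains `𝔟ₛ + 𝔪ʲ` stabilize at ideals `Jⱼ ⊆ Jⱼ₊₁ + 𝔪ʲ`, and lifting an
element of `Jₖ \ 𝔪ᵏ` level by level produces a nonzero element of `ker Φ`.
-/

open IsLocalRing

instance isArtinianRing_quotient_maximalIdeal_pow {R : Type*} [CommRing R] [IsNoetherianRing R]
    [IsLocalRing R] (j : ℕ) : IsArtinianRing (R ⧸ maximalIdeal R ^ j) := by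
  have : Ring.KrullDimLE 0 (R ⧸ maximalIdeal R ^ j) := Ring.krullDimLE_zero_iff.mpr fun P hP ↦
    Ideal.isMaximal_of_isIntegral_of_isMaximal_comap (R := R) _ <| by
      have hle : maximalIdeal R ^ j ≤ P.comap (Ideal.Quotient.mk _) := by
        simpa using Ideal.ker_le_comap (Ideal.Quotient.mk (maximalIdeal R ^ j)) (K := P)
      have hP' := hP.comap (Ideal.Quotient.mk (maximalIdeal R ^ j))
      rw [Ideal.Quotient.algebraMap_eq,
        (le_maximalIdeal hP'.ne_top).antisymm (Ideal.IsPrime.le_of_pow_le hle)]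
      exact maximalIdeal.isMaximal R
  exact IsNoetherianRing.isArtinianRing_of_krullDimLE_zero

theorem Ideal.exists_iInf_sup_eq_of_antitone {R : Type*} [CommRing R] {𝔞 : Ideal R}
    [IsArtinianRing (R ⧸ 𝔞)] {𝔟 : ℕ → Ideal R} (h𝔟 : Antitone 𝔟) :
    ∃ t, ⨅ s, (𝔟 s ⊔ 𝔞) = 𝔟 t ⊔ 𝔞 := by
  obtain ⟨t, ht⟩ := IsArtinian.monotone_stabilizes
    (⟨fun s ↦ OrderDual.toDual ((𝔟 s).map (Ideal.Quotient.mk 𝔞)),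
      fun _ _ h ↦ Ideal.map_mono (h𝔟 h)⟩ : ℕ →o (Ideal (R ⧸ 𝔞))ᵒᵈ)
  have hsup : ∀ s, 𝔟 s ⊔ 𝔞 = ((𝔟 s).map (Ideal.Quotient.mk 𝔞)).comap (Ideal.Quotient.mk 𝔞) :=
    fun s ↦ by rw [Ideal.comap_map_of_surjective' _ Ideal.Quotient.mk_surjective, Ideal.mk_ker]
  refine ⟨t, le_antisymm (iInf_le _ t) (le_iInf fun s ↦ ?_)⟩
  calc 𝔟 t ⊔ 𝔞 = 𝔟 (max s t) ⊔ 𝔞 := by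
        rw [hsup, hsup]; exact congrArg _ (ht _ (le_max_right s t))
    _ ≤ 𝔟 s ⊔ 𝔞 := sup_le_sup_right (h𝔟 (le_max_left s t)) _

namespace AdicCompletion

section

variable {R : Type*} [CommRing R] {I : Ideal R}

theorem eval_of_eq_zero_iff {n : ℕ} {r : R} : eval I R n (of I R r) = 0 ↔ r ∈ I ^ n := by
  rw [eval_of, Submodule.mkQ_apply, Submodule.Quotient.mk_eq_zero, smul_eq_mul, Ideal.mul_top]

theorem exists_eval_eq_eval_of (n : ℕ) (x : AdicCompletion I R) :
    ∃ r : R, eval I R n x = eval I R n (of I R r) := by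
  obtain ⟨r, hr⟩ := Submodule.Quotient.mk_surjective _ (eval I R n x)
  exact ⟨r, by rw [eval_of, Submodule.mkQ_apply, hr]⟩

theorem eval_eq_of_le {m n : ℕ} (hmn : m ≤ n) {x y : AdicCompletion I R}
    (h : eval I R n x = eval I R n y) : eval I R m x = eval I R m y := by
  simpa only [eval_apply, transitionMap_comp_eval_apply] using congrArg (transitionMap I R hmn) h

theorem eq_zero_of_forall_exists_le {𝔟 : ℕ → Ideal R} (h𝔟 : Antitone 𝔟)
    (hle : ∀ j, ∃ s, 𝔟 s ≤ I ^ j) {x : AdicCompletion I R}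
    (hx : ∀ k, ∃ r ∈ 𝔟 k, eval I R k x = eval I R k (of I R r)) : x = 0 := by
  ext j
  obtain ⟨s, hs⟩ := hle j
  obtain ⟨r, hr, hxr⟩ := hx (max s j)
  have hrj : r ∈ I ^ j := hs (h𝔟 (le_max_left s j) hr)
  change eval I R j x = eval I R j 0
  rw [eval_eq_of_le (le_max_right s j) hxr, eval_of_eq_zero_iff.mpr hrj, _root_.map_zero]

theorem exists_eval_eq_of_le_sup {J : ℕ → Ideal R} (hJ : Antitone J)
    (hlift : ∀ j, J j ≤ J (j + 1) ⊔ I ^ j) {k : ℕ} {r : R} (hr : r ∈ J k) :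
    ∃ x : AdicCompletion I R, eval I R k x = eval I R k (of I R r) ∧
      ∀ j, ∃ d ∈ J j, eval I R j x = eval I R j (of I R d) := by
  have step : ∀ j (a : R), ∃ b : R, a ∈ J j → b ∈ J (j + 1) ∧ a - b ∈ I ^ j := fun j a ↦ by
    by_cases ha : a ∈ J j
    · obtain ⟨b, hb, c, hc, hbc⟩ := Submodule.mem_sup.mp (hlift j ha)
      exact ⟨b, fun _ ↦ ⟨hb, by rwa [← hbc, add_sub_cancel_left]⟩⟩
    · exact ⟨a, fun h ↦ absurd h ha⟩
  choose F hF using step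
  let seq : ℕ → R := fun i ↦ Nat.rec r (fun i b ↦ F (k + i) b) i
  have hseq : ∀ i, seq i ∈ J (k + i) := fun i ↦ by
    induction i with
    | zero => exact hr
    | succ i ih => exact (hF _ _ ih).1
  let a : ℕ → R := fun j ↦ seq (j - k)
  have hcauchy : ∀ j, a j ≡ a (j + 1) [SMOD (I ^ j • ⊤ : Ideal R)] := fun j ↦ by
    rw [SModEq.sub_mem, smul_eq_mul, Ideal.mul_top]
    by_cases hjk : k ≤ j
    · have hsucc : a (j + 1) = F (k + (j - k)) (a j) := by
        simp only [a, show j + 1 - k = j - k + 1 by omega]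
        rfl
      rw [hsucc]
      exact Ideal.pow_le_pow_right (by omega) (hF _ _ (hseq (j - k))).2
    · simp only [a, show j + 1 - k = j - k by omega, sub_self, Submodule.zero_mem]
  refine ⟨mk I R (AdicCauchySequence.mk I R a hcauchy), ?_,
    fun j ↦ ⟨a j, hJ (by omega) (hseq (j - k)), rfl⟩⟩
  change eval I R k (of I R (seq (k - k))) = _
  rw [Nat.sub_self]
  rfl

variable (I) in
theorem exists_ne_zero_of_forall_not_le [∀ j, IsArtinianRing (R ⧸ I ^ j)]
    {𝔟 : ℕ → Ideal R} (h𝔟 : Antitone 𝔟) {k : ℕ} (hk : ∀ s, ¬ 𝔟 s ≤ I ^ k) :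
    ∃ x : AdicCompletion I R, x ≠ 0 ∧ ∀ j, ∃ r ∈ 𝔟 j, eval I R j x = eval I R j (of I R r) := by
  let J : ℕ → Ideal R := fun j ↦ ⨅ s, (𝔟 s ⊔ I ^ j)
  have hJ : Antitone J := fun i j hij ↦
    iInf_mono fun s ↦ sup_le_sup_left (Ideal.pow_le_pow_right hij) _
  have hlift : ∀ j, J j ≤ J (j + 1) ⊔ I ^ j := fun j ↦ by
    obtain ⟨t, ht⟩ := Ideal.exists_iInf_sup_eq_of_antitone (𝔞 := I ^ (j + 1)) h𝔟
    calc J j ≤ 𝔟 t ⊔ I ^ j := iInf_le _ t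
      _ = 𝔟 t ⊔ I ^ (j + 1) ⊔ I ^ j := by
        rw [sup_assoc, sup_eq_right.mpr (Ideal.pow_le_pow_right j.le_succ : I ^ (j + 1) ≤ I ^ j)]
      _ = J (j + 1) ⊔ I ^ j := by rw [← ht]
  obtain ⟨t, ht⟩ := Ideal.exists_iInf_sup_eq_of_antitone (𝔞 := I ^ k) h𝔟
  obtain ⟨r, hr𝔟, hrk⟩ := SetLike.not_le_iff_exists.mp (hk t)
  have hrJ : r ∈ J k := by
    change r ∈ ⨅ s, (𝔟 s ⊔ I ^ k)
    rw [ht]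
    exact Ideal.mem_sup_left hr𝔟
  obtain ⟨x, hxk, hx⟩ := exists_eval_eq_of_le_sup hJ hlift hrJ
  refine ⟨x, ?_, fun j ↦ ?_⟩
  · rintro rfl
    exact hrk (eval_of_eq_zero_iff.mp (hxk.symm.trans (_root_.map_zero _)))
  · obtain ⟨d, hd, hxd⟩ := hx j
    obtain ⟨b, hb, c, hc, rfl⟩ := Submodule.mem_sup.mp (iInf_le (fun s ↦ 𝔟 s ⊔ I ^ j) j hd)
    exact ⟨b, hb, by rw [hxd, _root_.map_add, _root_.map_add, eval_of_eq_zero_iff.mpr hc, add_zero]⟩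

end

section

variable {R S : Type*} [CommRing R] [CommRing S] {I : Ideal R} {J : Ideal S} {φ : R →+* S}
  {Φ : AdicCompletion I R →+* AdicCompletion J S}

theorem eval_map_eq_of_eval_eq (hcomm : ∀ r : R, Φ (algebraMap R _ r) = algebraMap S _ (φ r))
    (hcont : ∀ k x, eval I R k x = 0 → eval J S k (Φ x) = 0) {k : ℕ} {x : AdicCompletion I R}
    {r : R} (h : eval I R k x = eval I R k (of I R r)) :
    eval J S k (Φ x) = eval J S k (of J S (φ r)) := by
  have := hcont k (x - of I R r) (by rw [_root_.map_sub, h, sub_self])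
  rwa [_root_.map_sub, _root_.map_sub, sub_eq_zero,
    show Φ (of I R r) = of J S (φ r) from hcomm r] at this

theorem map_eq_zero_iff (hcomm : ∀ r : R, Φ (algebraMap R _ r) = algebraMap S _ (φ r))
    (hcont : ∀ k x, eval I R k x = 0 → eval J S k (Φ x) = 0) (x : AdicCompletion I R) :
    Φ x = 0 ↔ ∀ k, ∃ r ∈ (J ^ k).comap φ, eval I R k x = eval I R k (of I R r) := by
  constructor
  · intro hx k
    obtain ⟨r, hr⟩ := exists_eval_eq_eval_of k x
    refine ⟨r, eval_of_eq_zero_iff.mp ?_, hr⟩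
    rw [← eval_map_eq_of_eval_eq hcomm hcont hr, hx, _root_.map_zero]
  · intro hx
    ext k
    obtain ⟨r, hr, hxr⟩ := hx k
    change eval J S k (Φ x) = eval J S k 0
    rw [eval_map_eq_of_eval_eq hcomm hcont hxr, eval_of_eq_zero_iff.mpr hr, _root_.map_zero]

end

end AdicCompletion

open AdicCompletion in
theorem completion_map_injective_iff_general {R S : Type*} [CommRing R] [CommRing S]
    [IsNoetherianRing R] [IsLocalRing R] [IsLocalRing S]
    (φ : R →+* S)
    (Φ : AdicCompletion (IsLocalRing.maximalIdeal R) R →+*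
          AdicCompletion (IsLocalRing.maximalIdeal S) S)
    (hcomm : ∀ r : R,
      Φ (algebraMap R (AdicCompletion (IsLocalRing.maximalIdeal R) R) r) =
        algebraMap S (AdicCompletion (IsLocalRing.maximalIdeal S) S) (φ r))
    (hcont : ∀ (k : ℕ) (x : AdicCompletion (IsLocalRing.maximalIdeal R) R),
      AdicCompletion.eval (IsLocalRing.maximalIdeal R) R k x = 0 →
        AdicCompletion.eval (IsLocalRing.maximalIdeal S) S k (Φ x) = 0) :
    Function.Injective Φ ↔
      ∀ k : ℕ, 0 < k → ∃ s : ℕ, 0 < s ∧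
        (IsLocalRing.maximalIdeal S ^ s).comap φ ≤ IsLocalRing.maximalIdeal R ^ k := by
  have hanti : Antitone fun s ↦ (maximalIdeal S ^ s).comap φ :=
    fun _ _ h ↦ Ideal.comap_mono (Ideal.pow_le_pow_right h)
  rw [injective_iff_map_eq_zero]
  constructor
  · intro hΦ k _
    by_contra! hk
    obtain ⟨x, hx0, hx⟩ := exists_ne_zero_of_forall_not_le (maximalIdeal R) hanti (k := k)
      fun s hs ↦ hk (s + 1) s.succ_pos ((hanti s.le_succ).trans hs)
    exact hx0 (hΦ x ((map_eq_zero_iff hcomm hcont x).mpr hx))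
  · intro h x hx
    refine eq_zero_of_forall_exists_le hanti (fun j ↦ ?_) ((map_eq_zero_iff hcomm hcont x).mp hx)
    obtain ⟨s, -, hs⟩ := h (j + 1) j.succ_pos
    exact ⟨s, hs.trans (Ideal.pow_le_pow_right j.le_succ)⟩

/-- For an injective local homomorphism `φ : (R,m) → (S,n)` of Noetherian local
rings, the induced map `φ̂ : R̂ → Ŝ` on adic completions (characterized by compatibility with
the canonical maps and with the projections to the quotients mod powers) is injective iff for
each positive `k` there exists a positive `s` with `n^s ∩ R ⊆ m^k`. -/
theorem completion_map_injective_iff {R S : Type*} [CommRing R] [CommRing S]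
    [IsNoetherianRing R] [IsNoetherianRing S] [IsLocalRing R] [IsLocalRing S]
    (φ : R →+* S) (hinj : Function.Injective φ) [IsLocalHom φ]
    (Φ : AdicCompletion (IsLocalRing.maximalIdeal R) R →+*
          AdicCompletion (IsLocalRing.maximalIdeal S) S)
    (hcomm : ∀ r : R,
      Φ (algebraMap R (AdicCompletion (IsLocalRing.maximalIdeal R) R) r) =
        algebraMap S (AdicCompletion (IsLocalRing.maximalIdeal S) S) (φ r))
    (hcont : ∀ (k : ℕ) (x : AdicCompletion (IsLocalRing.maximalIdeal R) R),
      AdicCompletion.eval (IsLocalRing.maximalIdeal R) R k x = 0 →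
        AdicCompletion.eval (IsLocalRing.maximalIdeal S) S k (Φ x) = 0) :
    Function.Injective Φ ↔
      ∀ k : ℕ, 0 < k → ∃ s : ℕ, 0 < s ∧
        (IsLocalRing.maximalIdeal S ^ s).comap φ ≤ IsLocalRing.maximalIdeal R ^ k :=
  completion_map_injective_iff_general φ Φ hcomm hcont
end

section
/- Let S be a local domain essentially finitely generated over a field k, i.e., S = A_N/QA_N where A = k[x₁,…,x_r] is a polynomial ring, Q ⊂ N are primes of A with N of height s. Then there exists an extension field F of k and a finitely generated F-algebra domain D with a maximal ideal M such that S ≅ D_M. -/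
/-!
By Noether normalization, `A ⧸ P` is integral over a polynomial ring `R = k[y₁, …, y_s]`, where
`A` is a finitely generated `k`-algebra with `S = A_P`. Lifting the `yᵢ` to `A`, the nonzero
elements of `R` avoid `P`; inverting them gives a finitely generated algebra `D` over
`F = Frac R`. Every element of `A` outside `P` divides, modulo `P`, a nonzero element of `R`, so
`P D` is maximal, and `S = A_P = D_{P D}`.
-/

universe u

open IsLocalRing

namespace MvPolynomial

theorem exists_comp_eq_of_surjective {R A B ι : Type*} [CommSemiring R] [CommSemiring A]
    [CommSemiring B] [Algebra R A] [Algebra R B] {f : A →ₐ[R] B} (hf : Function.Surjective f)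
    (g : MvPolynomial ι R →ₐ[R] B) : ∃ φ : MvPolynomial ι R →ₐ[R] A, f.comp φ = g := by
  choose t ht using fun i => hf (g (X i))
  exact ⟨aeval t, algHom_ext fun i => by simp [ht]⟩

end MvPolynomial

theorem IsLocalization.isLocalization_atPrime_under_maximalIdeal {A : Type*} (S : Type*)
    [CommRing A] [CommRing S] [IsLocalRing S] [Algebra A S] (W : Submonoid A)
    [IsLocalization W S] : IsLocalization.AtPrime S ((maximalIdeal S).under A) :=
  IsLocalization.of_le W _ (fun w hw hmem => hmem (IsLocalization.map_units S ⟨w, hw⟩))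
    fun a ha => by simpa [Ideal.primeCompl] using ha

theorem Algebra.FiniteType.localization_algebraMapSubmonoid {R A : Type u} [CommRing R]
    [CommRing A] [Algebra R A] [Algebra.FiniteType R A] (M : Submonoid R) :
    Algebra.FiniteType (Localization M) (Localization (Algebra.algebraMapSubmonoid A M)) :=
  haveI : IsLocalization (M.map (algebraMap R A))
      (Localization (Algebra.algebraMapSubmonoid A M)) := Localization.isLocalization
  RingHom.finiteType_algebraMap.mp <| RingHom.finiteType_localizationPreserves (algebraMap R A) M
    _ _ (RingHom.finiteType_algebraMap.mpr ‹_›)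

section LocalizationDisjointFromPrime

variable {A : Type*} [CommRing A] (W : Submonoid A) (P : Ideal A) [P.IsPrime]

theorem IsLocalization.isLocalization_atPrime_map_of_disjoint (hW : Disjoint (W : Set A) P)
    [(P.map (algebraMap A (Localization W))).IsPrime] :
    IsLocalization.AtPrime (Localization.AtPrime (P.map (algebraMap A (Localization W)))) P := by
  have := IsLocalization.isLocalization_isLocalization_atPrime_isLocalization W
    (Localization.AtPrime (P.map (algebraMap A (Localization W))))
    (P.map (algebraMap A (Localization W)))
  convert this
  exact (IsLocalization.under_map_of_isPrime_disjoint W _ ‹_› hW).symm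

theorem IsLocalization.isMaximal_map_of_forall_dvd {D : Type*} [CommRing D] [Algebra A D]
    [IsLocalization W D] (hW : Disjoint (W : Set A) P)
    (hdvd : ∀ a ∉ P, ∃ w ∈ W, Ideal.Quotient.mk P a ∣ Ideal.Quotient.mk P w) :
    (P.map (algebraMap A D)).IsMaximal := by
  -- A maximal ideal above `P D` contracts to a prime containing `P` and missing `W`; the
  -- divisibility hypothesis leaves no room between that prime and `P`.
  have hprime := IsLocalization.isPrime_of_isPrime_disjoint W D P ‹_› hW
  obtain ⟨M, hM, hle⟩ := Ideal.exists_le_maximal _ hprime.ne_top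
  suffices M ≤ P.map (algebraMap A D) by rwa [le_antisymm this hle] at hM
  rw [← IsLocalization.map_under W D M]
  refine Ideal.map_mono fun a ha => by_contra fun haP => ?_
  obtain ⟨w, hw, c, hc⟩ := hdvd a haP
  obtain ⟨c, rfl⟩ := Ideal.Quotient.mk_surjective c
  have hwM : w ∈ M.under A := by
    rw [← map_mul, Ideal.Quotient.eq] at hc
    simpa using (M.under A).add_mem (Ideal.le_comap_of_map_le hle hc)
      ((M.under A).mul_mem_right c ha)
  exact hM.ne_top (M.eq_top_of_isUnit_mem hwM (IsLocalization.map_units D ⟨w, hw⟩))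

end LocalizationDisjointFromPrime

section AlgebraMapSubmonoid

variable {R A : Type*} [CommRing R] [CommRing A] [Algebra R A] (P : Ideal A)

open nonZeroDivisors

theorem disjoint_algebraMapSubmonoid_nonZeroDivisors [Nontrivial R]
    (hinj : Function.Injective (algebraMap R (A ⧸ P))) :
    Disjoint (Algebra.algebraMapSubmonoid A R⁰ : Set A) P := by
  rw [Set.disjoint_left]
  rintro _ ⟨r, hr, rfl⟩ hrP
  refine nonZeroDivisors.ne_zero hr (hinj ?_)
  rw [IsScalarTower.algebraMap_apply R A (A ⧸ P), Ideal.Quotient.algebraMap_eq,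
    Ideal.Quotient.eq_zero_iff_mem.mpr hrP, map_zero]

theorem exists_mem_algebraMapSubmonoid_dvd [NoZeroDivisors R] [P.IsPrime]
    [Algebra.IsAlgebraic R (A ⧸ P)] (a : A) (ha : a ∉ P) :
    ∃ w ∈ Algebra.algebraMapSubmonoid A R⁰, Ideal.Quotient.mk P a ∣ Ideal.Quotient.mk P w := by
  have ha' : Ideal.Quotient.mk P a ≠ 0 := by rwa [Ne, Ideal.Quotient.eq_zero_iff_mem]
  obtain ⟨r, hr, hdvd⟩ := (Algebra.IsAlgebraic.isAlgebraic (R := R) (Ideal.Quotient.mk P a))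
    |>.exists_nonzero_dvd (mem_nonZeroDivisors_of_ne_zero ha')
  refine ⟨_, ⟨r, mem_nonZeroDivisors_of_ne_zero hr, rfl⟩, ?_⟩
  rwa [← Ideal.Quotient.algebraMap_eq, ← IsScalarTower.algebraMap_apply]

end AlgebraMapSubmonoid

open nonZeroDivisors in
theorem exists_ringEquiv_localization_atMaximal_of_isAlgebraic (k R A S : Type u) [Field k]
    [CommRing R] [IsDomain R] [Algebra k R] [CommRing A] [IsDomain A] [Algebra R A]
    [Algebra.FiniteType R A] [CommRing S] [Algebra A S] (P : Ideal A) [P.IsPrime]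
    [IsLocalization.AtPrime S P] (hinj : Function.Injective (algebraMap R (A ⧸ P)))
    [Algebra.IsAlgebraic R (A ⧸ P)] :
    ∃ (F : Type u) (_ : Field F) (_ : Algebra k F) (D : Type u) (_ : CommRing D)
      (_ : IsDomain D) (_ : Algebra F D) (_ : Algebra.FiniteType F D)
      (M : Ideal D) (_ : M.IsMaximal) (_ : M.IsPrime),
        Nonempty (S ≃+* Localization.AtPrime M) := by
  set W := Algebra.algebraMapSubmonoid A R⁰
  have hW := disjoint_algebraMapSubmonoid_nonZeroDivisors P hinj
  have : IsDomain (Localization W) := IsLocalization.isDomain_localization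
    (le_nonZeroDivisors_of_noZeroDivisors fun h0 => Set.disjoint_left.mp hW h0 P.zero_mem)
  have hM := IsLocalization.isMaximal_map_of_forall_dvd W P (D := Localization W) hW
    (exists_mem_algebraMapSubmonoid_dvd P)
  have := IsLocalization.isLocalization_atPrime_map_of_disjoint W P hW
  exact ⟨FractionRing R, inferInstance, inferInstance, Localization W, inferInstance,
    inferInstance, inferInstance, Algebra.FiniteType.localization_algebraMapSubmonoid R⁰, _, hM,
    hM.isPrime, ⟨(IsLocalization.algEquiv P.primeCompl S _).toRingEquiv⟩⟩

/-- A local domain `S` essentially finitely generated over a field `k` is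
isomorphic to the localization of a finitely generated algebra domain `D` over an extension
field `F` of `k` at a maximal ideal of `D`. -/
theorem essFiniteType_eq_localization_at_maximal (k : Type u) [Field k] (S : Type u)
    [CommRing S] [IsDomain S] [IsLocalRing S] [Algebra k S] [Algebra.EssFiniteType k S] :
    ∃ (F : Type u) (_ : Field F) (_ : Algebra k F) (D : Type u) (_ : CommRing D)
      (_ : IsDomain D) (_ : Algebra F D) (_ : Algebra.FiniteType F D)
      (M : Ideal D) (_ : M.IsMaximal) (_ : M.IsPrime),
        Nonempty (S ≃+* Localization.AtPrime M) := by
  set A := Algebra.EssFiniteType.subalgebra k S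
  set P := (maximalIdeal S).under A
  have : P.IsPrime := Ideal.IsPrime.under A (maximalIdeal S)
  have : IsLocalization.AtPrime S P := IsLocalization.isLocalization_atPrime_under_maximalIdeal S
    (Algebra.EssFiniteType.submonoid k S)
  have : Nontrivial (A ⧸ P) := Ideal.Quotient.nontrivial_iff.mpr ‹P.IsPrime›.ne_top
  obtain ⟨s, g, hg_inj, hg_int⟩ := exists_integral_inj_algHom_of_fg k (A ⧸ P)
  obtain ⟨φ, hφ⟩ :=
    MvPolynomial.exists_comp_eq_of_surjective (Ideal.Quotient.mkₐ_surjective k P) g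
  let : Algebra (MvPolynomial (Fin s) k) A := φ.toAlgebra
  have : IsScalarTower k (MvPolynomial (Fin s) k) A :=
    IsScalarTower.of_algebraMap_eq' φ.comp_algebraMap.symm
  have : Algebra.FiniteType (MvPolynomial (Fin s) k) A :=
    .of_restrictScalars_finiteType k _ A
  have hg : algebraMap (MvPolynomial (Fin s) k) (A ⧸ P) = g := congrArg AlgHom.toRingHom hφ
  have : Algebra.IsIntegral (MvPolynomial (Fin s) k) (A ⧸ P) :=
    ⟨fun x => by rw [IsIntegral, hg]; exact hg_int x⟩
  exact exists_ringEquiv_localization_atMaximal_of_isAlgebraic k (MvPolynomial (Fin s) k) A S P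
    (hg ▸ hg_inj)
end
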